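/- arXiv:2507.08163 — 3 statements merged into one kernel-verified Lean document; each statement's English description precedes it below -/
import Mathlib

section
/- (Gaussian hypothesis-testing dominance, spherical case.) Let σ > 0, d ≥ 1, and for v ∈ ℝ^d let P_v denote the Gaussian product measure on ℝ^d whose i-th coordinate is the Gaussian measure on ℝ with mean v_i and variance σ². Let Φ(t) denote the standard normal CDF, Φ(t) = (2π)^{−1/2}·∫_{−∞}^t e^{−u²/2} du. Then for all v, w ∈ ℝ^d with ‖v − w‖₂ ≤ r, every Borel set E ⊆ ℝ^d, and every a ∈ ℝ: if P_v(E) ≥ Φ(a) then P_w(E) ≥ Φ(a − r/σ). -/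
open MeasureTheory ProbabilityTheory

/-- The standard normal cumulative distribution function. -/
noncomputable def stdNormalCDF (t : ℝ) : ℝ :=
  ∫ u in Set.Iic t, (Real.sqrt (2 * Real.pi))⁻¹ * Real.exp (-u ^ 2 / 2)

/-!
The Gaussian with mean `m` and covariance `σ² I` is the image of the standard Gaussian `N` under
`x ↦ m + σ x`, so the claim becomes: `N S ≥ Φ(a)` implies `N (S - u) ≥ Φ(a - ‖u‖)`.
By Cameron–Martin, `N` translated by `u` has density `exp (⟪u, x⟫ - ‖u‖² / 2)` with respect
to `N`, an increasing function of `⟪u, x⟫`. Hence (Neyman–Pearson) among all sets of `N`-mass at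
least `Φ(a)` the half-space `{⟪u, x⟫ ≤ ‖u‖ a}`, of `N`-mass exactly `Φ(a)`, has the least mass
under the translate, and that mass is `Φ(a - ‖u‖)`.
-/

open Real Set
open scoped ENNReal NNReal RealInnerProductSpace

theorem ofReal_stdNormalCDF (t : ℝ) :
    ENNReal.ofReal (stdNormalCDF t) = gaussianReal 0 1 (Iic t) := by
  rw [gaussianReal_apply_eq_integral _ one_ne_zero, stdNormalCDF]
  simp [gaussianPDFReal]

theorem withDensity_apply_le_of_threshold {α : Type*} [MeasurableSpace α] {μ : Measure α}
    {f : α → ℝ≥0∞} {A F : Set α} {κ : ℝ≥0∞} (hA : MeasurableSet A) (hF : MeasurableSet F)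
    (hμA : μ A ≠ ∞) (hAF : μ A ≤ μ F) (hle : ∀ x ∈ A, f x ≤ κ) (hge : ∀ x ∉ A, κ ≤ f x) :
    μ.withDensity f A ≤ μ.withDensity f F := by
  have hdiff : μ (A \ F) ≤ μ (F \ A) := by
    rw [← measure_inter_add_sdiff A hF, ← measure_inter_add_sdiff F hA, inter_comm F A] at hAF
    exact (ENNReal.add_le_add_iff_left (measure_ne_top_of_subset inter_subset_left hμA)).1 hAF
  rw [withDensity_apply _ hA, withDensity_apply _ hF, ← lintegral_inter_add_sdiff f A hF,
    ← lintegral_inter_add_sdiff f F hA, inter_comm F A]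
  refine add_le_add le_rfl ?_
  calc ∫⁻ x in A \ F, f x ∂μ ≤ ∫⁻ _ in A \ F, κ ∂μ :=
        setLIntegral_mono' (hA.diff hF) fun x hx => hle x hx.1
    _ = κ * μ (A \ F) := setLIntegral_const _ _
    _ ≤ κ * μ (F \ A) := by gcongr
    _ = ∫⁻ _ in F \ A, κ ∂μ := (setLIntegral_const _ _).symm
    _ ≤ ∫⁻ x in F \ A, f x ∂μ := setLIntegral_mono' (hF.diff hA) fun x hx => hge x hx.2

theorem MeasurableEquiv.map_withDensity {α β : Type*} [MeasurableSpace α] [MeasurableSpace β]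
    (e : α ≃ᵐ β) (μ : Measure α) (f : α → ℝ≥0∞) :
    (μ.withDensity f).map e = (μ.map e).withDensity (f ∘ e.symm) := by
  ext s hs
  rw [Measure.map_apply e.measurable hs, withDensity_apply _ (hs.preimage e.measurable),
    withDensity_apply _ hs, e.restrict_map, lintegral_map_equiv]
  simp

theorem gaussianReal_eq_withDensity_gaussianReal_zero (m : ℝ) {v : ℝ≥0} (hv : v ≠ 0) :
    gaussianReal m v = (gaussianReal 0 v).withDensity
      fun t => ENNReal.ofReal (exp ((m * t - m ^ 2 / 2) / v)) := by
  rw [gaussianReal_of_var_ne_zero _ hv, gaussianReal_of_var_ne_zero _ hv,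
    ← withDensity_mul _ (measurable_gaussianPDF _ _) (by fun_prop)]
  congr 1
  funext t
  rw [Pi.mul_apply, gaussianPDF, gaussianPDF, ← ENNReal.ofReal_mul (gaussianPDFReal_nonneg _ _ _)]
  congr 1
  have hv' : (v : ℝ) ≠ 0 := NNReal.coe_ne_zero.2 hv
  simp only [gaussianPDFReal, sub_zero, mul_assoc, ← exp_add]
  congr 2
  field_simp
  ring

section Product

variable {ι : Type*} [Fintype ι] {α : ι → Type*} [∀ i, MeasurableSpace (α i)]
  {μ : ∀ i, Measure (α i)} [∀ i, IsProbabilityMeasure (μ i)]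

theorem lintegral_fintype_prod_eq_prod {f : ∀ i, α i → ℝ≥0∞} (hf : ∀ i, Measurable (f i)) :
    ∫⁻ x, ∏ i, f i (x i) ∂Measure.pi μ = ∏ i, ∫⁻ t, f i t ∂μ i := by
  rw [lintegral_prod_eq_prod_lintegral_of_indepFun _ _
    (iIndepFun_pi fun i => (hf i).aemeasurable) fun i => (hf i).comp (measurable_pi_apply i)]
  exact Finset.prod_congr rfl fun i _ => (measurePreserving_eval μ i).lintegral_comp (hf i)

theorem Measure.pi_eq_withDensity_prod {ν : ∀ i, Measure (α i)} [∀ i, SigmaFinite (ν i)]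
    {f : ∀ i, α i → ℝ≥0∞} (hf : ∀ i, Measurable (f i))
    (hν : ∀ i, ν i = (μ i).withDensity (f i)) :
    Measure.pi ν = (Measure.pi μ).withDensity fun x => ∏ i, f i (x i) := by
  classical
  refine Measure.pi_eq fun s hs => ?_
  have hind : (univ.pi s).indicator (fun x => ∏ i, f i (x i))
      = fun x => ∏ i, (s i).indicator (f i) (x i) := by
    funext x
    by_cases hx : x ∈ univ.pi s
    · rw [indicator_of_mem hx]
      exact Finset.prod_congr rfl fun i _ => (indicator_of_mem (hx i (mem_univ i)) _).symm
    · obtain ⟨i, hi⟩ : ∃ i, x i ∉ s i := by simpa [mem_univ_pi] using hx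
      rw [indicator_of_notMem hx, Finset.prod_eq_zero (Finset.mem_univ i) (indicator_of_notMem hi _)]
  rw [withDensity_apply _ (.univ_pi hs), ← lintegral_indicator (.univ_pi hs), hind,
    lintegral_fintype_prod_eq_prod fun i => (hf i).indicator (hs i)]
  simp_rw [hν, withDensity_apply _ (hs _), lintegral_indicator (hs _)]

end Product

section StdGaussian

variable {E : Type*} [NormedAddCommGroup E] [InnerProductSpace ℝ E] [FiniteDimensional ℝ E]
  [MeasurableSpace E] [BorelSpace E]

theorem stdGaussian_map_inner (u : E) :
    (stdGaussian E).map (⟪u, ·⟫) = gaussianReal 0 (‖u‖₊ ^ 2) := by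
  have h := IsGaussian.map_eq_gaussianReal (μ := stdGaussian E) (innerSL ℝ u)
  rw [integral_strongDual_stdGaussian, variance_dual_stdGaussian, innerSL_apply_norm] at h
  rw [show ‖u‖₊ ^ 2 = (‖u‖ ^ 2).toNNReal by ext; simp]
  exact h

theorem stdGaussian_setOf_inner_le {u : E} (hu : u ≠ 0) (c : ℝ) :
    stdGaussian E {x | ⟪u, x⟫ ≤ c} = gaussianReal 0 1 (Iic (c / ‖u‖)) := by
  set e := ‖u‖⁻¹ • u
  have hnorm : 0 < ‖u‖ := norm_pos_iff.2 hu
  have he : ‖e‖₊ = 1 := by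
    ext; simp [e, norm_smul, hnorm.ne']
  have hset : {x | ⟪u, x⟫ ≤ c} = (⟪e, ·⟫) ⁻¹' Iic (c / ‖u‖) := by
    ext x
    change ⟪u, x⟫ ≤ c ↔ ⟪e, x⟫ ≤ c / ‖u‖
    rw [real_inner_smul_left, le_div_iff₀ hnorm]
    field_simp
  rw [hset, ← Measure.map_apply (by fun_prop) measurableSet_Iic, stdGaussian_map_inner, he,
    one_pow]

end StdGaussian

section EuclideanSpace

variable {ι : Type*} [Fintype ι]

theorem stdGaussian_map_add_const (u : EuclideanSpace ℝ ι) :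
    (stdGaussian (EuclideanSpace ℝ ι)).map (· + u) = (stdGaussian (EuclideanSpace ℝ ι)).withDensity
      fun x => ENNReal.ofReal (exp (⟪u, x⟫ - ‖u‖ ^ 2 / 2)) := by
  have hshift : (Measure.pi fun _ : ι => gaussianReal 0 1).map (· + u.ofLp)
      = Measure.pi fun i => gaussianReal (u i) 1 := by
    rw [show (· + u.ofLp) = fun (x : ι → ℝ) i => x i + u i from rfl,
      Measure.pi_map_pi (μ := fun _ => gaussianReal 0 1) (f := fun i t => t + u i)
        fun _ => by fun_prop]
    simp [gaussianReal_map_add_const]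
  have hdens : Measure.pi (fun i => gaussianReal (u i) 1)
      = (Measure.pi fun _ => gaussianReal 0 1).withDensity
          fun x => ∏ i, ENNReal.ofReal (exp (u i * x i - u i ^ 2 / 2)) :=
    Measure.pi_eq_withDensity_prod (f := fun i t => ENNReal.ofReal (exp (u i * t - u i ^ 2 / 2)))
      (fun _ => by fun_prop) fun i => by
        rw [gaussianReal_eq_withDensity_gaussianReal_zero (u i) one_ne_zero]
        simp only [NNReal.coe_one, div_one]
  rw [← map_pi_eq_stdGaussian (ι := ι), Measure.map_map (by fun_prop) (by fun_prop),
    show (· + u) ∘ WithLp.toLp 2 = MeasurableEquiv.toLp 2 (ι → ℝ) ∘ (· + u.ofLp) from rfl,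
    ← Measure.map_map (by fun_prop) (by fun_prop), hshift, hdens,
    MeasurableEquiv.map_withDensity, MeasurableEquiv.coe_toLp]
  congr 1
  funext x
  rw [Function.comp_apply, ← ENNReal.ofReal_prod_of_nonneg fun _ _ => (exp_pos _).le, ← exp_sum,
    Finset.sum_sub_distrib, ← Finset.sum_div, PiLp.inner_apply, EuclideanSpace.real_norm_sq_eq]
  simp [mul_comm]

theorem le_stdGaussian_preimage_add_const (u : EuclideanSpace ℝ ι)
    {S : Set (EuclideanSpace ℝ ι)} (hS : MeasurableSet S) {a : ℝ}
    (h : gaussianReal 0 1 (Iic a) ≤ stdGaussian (EuclideanSpace ℝ ι) S) :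
    gaussianReal 0 1 (Iic (a - ‖u‖)) ≤ stdGaussian (EuclideanSpace ℝ ι) ((· + u) ⁻¹' S) := by
  rcases eq_or_ne u 0 with rfl | hu
  · simpa using h
  have hnorm : 0 < ‖u‖ := norm_pos_iff.2 hu
  set A := {x : EuclideanSpace ℝ ι | ⟪u, x⟫ ≤ ‖u‖ * a}
  have hA : MeasurableSet A := measurableSet_le (by fun_prop) (by fun_prop)
  have hμA : stdGaussian _ A = gaussianReal 0 1 (Iic a) := by
    rw [stdGaussian_setOf_inner_le hu, mul_div_cancel_left₀ _ hnorm.ne']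
  have hshift : stdGaussian _ ((· + u) ⁻¹' A) = gaussianReal 0 1 (Iic (a - ‖u‖)) := by
    have : (· + u) ⁻¹' A = {x | ⟪u, x⟫ ≤ ‖u‖ * a - ‖u‖ ^ 2} := by
      ext x
      simp [A, inner_add_right, le_sub_iff_add_le]
    rw [this, stdGaussian_setOf_inner_le hu]
    congr 2
    field_simp
  rw [← hshift, ← Measure.map_apply (by fun_prop) hA, ← Measure.map_apply (by fun_prop) hS,
    stdGaussian_map_add_const]
  refine withDensity_apply_le_of_threshold hA hS (measure_ne_top _ _) (hμA.trans_le h)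
    (κ := ENNReal.ofReal (exp (‖u‖ * a - ‖u‖ ^ 2 / 2))) (fun x hx => ?_) fun x hx => ?_
  · gcongr
    exact hx
  · gcongr
    exact (not_le.1 hx).le

theorem map_toLp_pi_gaussianReal (v : EuclideanSpace ℝ ι) (σ : ℝ) :
    (Measure.pi fun i => gaussianReal (v i) ⟨σ ^ 2, sq_nonneg σ⟩).map (WithLp.toLp 2)
      = (stdGaussian (EuclideanSpace ℝ ι)).map fun x => v + σ • x := by
  have hcoord : ∀ i, gaussianReal (v i) ⟨σ ^ 2, sq_nonneg σ⟩
      = (gaussianReal 0 1).map (fun t => v i + σ * t) := by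
    intro i
    rw [show (fun t => v i + σ * t) = (v i + ·) ∘ (σ * ·) from rfl,
      ← Measure.map_map (by fun_prop) (by fun_prop), gaussianReal_map_const_mul,
      gaussianReal_map_const_add]
    congr 1
    · simp
    · exact (mul_one _).symm
  simp_rw [hcoord]
  rw [← Measure.pi_map_pi fun _ => by fun_prop, ← map_pi_eq_stdGaussian,
    Measure.map_map (by fun_prop) (by fun_prop), Measure.map_map (by fun_prop) (by fun_prop)]
  rfl

end EuclideanSpace

theorem gaussian_dominance_spherical_general (d : ℕ) (σ r : ℝ) (hσ : 0 < σ)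
    (v w : EuclideanSpace ℝ (Fin d)) (hvw : ‖v - w‖ ≤ r)
    (E : Set (EuclideanSpace ℝ (Fin d))) (hE : MeasurableSet E) (a : ℝ)
    (h : (Measure.pi fun i => gaussianReal (v i) ⟨σ ^ 2, sq_nonneg σ⟩) (WithLp.toLp 2 ⁻¹' E)
          ≥ ENNReal.ofReal (stdNormalCDF a)) :
    (Measure.pi fun i => gaussianReal (w i) ⟨σ ^ 2, sq_nonneg σ⟩) (WithLp.toLp 2 ⁻¹' E)
      ≥ ENNReal.ofReal (stdNormalCDF (a - r / σ)) := by
  have hlaw : ∀ m : EuclideanSpace ℝ (Fin d),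
      (Measure.pi fun i => gaussianReal (m i) ⟨σ ^ 2, sq_nonneg σ⟩) (WithLp.toLp 2 ⁻¹' E)
        = stdGaussian _ ((fun x => m + σ • x) ⁻¹' E) := fun m => by
    rw [← Measure.map_apply (by fun_prop) hE, map_toLp_pi_gaussianReal,
      Measure.map_apply (by fun_prop) hE]
  set u := σ⁻¹ • (w - v)
  have hshift : (fun x => w + σ • x) ⁻¹' E = (· + u) ⁻¹' ((fun x => v + σ • x) ⁻¹' E) := by
    ext x
    simp only [mem_preimage, u, smul_add, smul_smul, mul_inv_cancel₀ hσ.ne', one_smul]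
    rw [show v + (σ • x + (w - v)) = w + σ • x by abel]
  have hu : ‖u‖ ≤ r / σ := by
    rw [norm_smul, norm_inv, Real.norm_of_nonneg hσ.le, norm_sub_rev, inv_mul_eq_div]
    gcongr
  rw [ge_iff_le, ofReal_stdNormalCDF, hlaw] at h ⊢
  rw [hshift]
  calc gaussianReal 0 1 (Iic (a - r / σ)) ≤ gaussianReal 0 1 (Iic (a - ‖u‖)) :=
        measure_mono (Iic_subset_Iic.2 (by linarith))
    _ ≤ _ := le_stdGaussian_preimage_add_const u (hE.preimage (by fun_prop)) h

/-- Gaussian hypothesis-testing dominance, spherical case: for the spherical Gaussian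
measure `P_v` on `ℝ^d` with mean `v` and coordinate variance `σ²`, if
`‖v - w‖₂ ≤ r` and `P_v E ≥ Φ(a)`, then `P_w E ≥ Φ(a - r/σ)`. -/
theorem gaussian_dominance_spherical (d : ℕ) (hd : 1 ≤ d) (σ r : ℝ) (hσ : 0 < σ)
    (hr : 0 ≤ r) (v w : EuclideanSpace ℝ (Fin d)) (hvw : ‖v - w‖ ≤ r)
    (E : Set (EuclideanSpace ℝ (Fin d))) (hE : MeasurableSet E) (a : ℝ)
    (h : (Measure.pi fun i => gaussianReal (v i) ⟨σ ^ 2, sq_nonneg σ⟩) (WithLp.toLp 2 ⁻¹' E)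
          ≥ ENNReal.ofReal (stdNormalCDF a)) :
    (Measure.pi fun i => gaussianReal (w i) ⟨σ ^ 2, sq_nonneg σ⟩) (WithLp.toLp 2 ⁻¹' E)
      ≥ ENNReal.ofReal (stdNormalCDF (a - r / σ)) :=
  gaussian_dominance_spherical_general d σ r hσ v w hvw E hE a h
end

section
/- (Non-adaptive composition of smoothing mechanisms.) Let d ≥ 1, k ≥ 1, and σ₁, …, σ_k > 0, and for x ∈ ℝ^d let P_x denote the product measure on (ℝ^d)^k whose i-th block is the Gaussian product measure on ℝ^d with mean x and coordinate variance σ_i² (i.e., the joint law of (x + Z₁, …, x + Z_k) with independent Z_i ∼ N(0, σ_i²·I_d)). Let Φ(t) denote the standard normal CDF, Φ(t) = (2π)^{−1/2}·∫_{−∞}^t e^{−u²/2} du. Then for all x, e ∈ ℝ^d, every Borel set E ⊆ (ℝ^d)^k, and every a ∈ ℝ: if P_x(E) ≥ Φ(a) then P_{x+e}(E) ≥ Φ(a − ‖e‖₂·√(∑_{i=1}^k 1/σ_i²)). -/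
open MeasureTheory ProbabilityTheory

/-!
View the `k` blocks of `d` coordinates as one product of real Gaussians indexed by
`p = (i, j)`, with means `x_j` and variances `σ_i²`; the shift is `e_j = σ_i² θ_p` with
`θ_p = e_j / σ_i²`. The shifted product has density `exp (T - M - s² / 2)` with respect to the
unshifted one, where `T y = ∑ θ_p y_p`, `M = ∑ θ_p x_j` and `s² = ∑ σ_i² θ_p² = ‖e‖² ∑ 1 / σ_i²`.
This density is increasing in `T`, so by the Neyman–Pearson argument the half-space
`{T ≤ M + s a}`, of unshifted mass exactly `Φ(a)`, has the least shifted mass among all events of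
unshifted mass at least `Φ(a)`. Since `T` is Gaussian with variance `s²` under both measures and
its mean moves by `s²`, that least mass is `Φ(a - s)`.
-/

open Real Set
open scoped ENNReal NNReal

lemma MeasureTheory.Measure.withDensity_apply_le_of_sublevel {Ω : Type*} [MeasurableSpace Ω]
    {μ : Measure Ω} [IsFiniteMeasure μ] {ρ : Ω → ℝ≥0∞} {A E : Set Ω}
    (hA : MeasurableSet A) (hE : MeasurableSet E) {L : ℝ≥0∞}
    (hρA : ∀ y ∈ A, ρ y ≤ L) (hρAc : ∀ y ∉ A, L ≤ ρ y) (hAE : μ A ≤ μ E) :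
    μ.withDensity ρ A ≤ μ.withDensity ρ E := by
  set ν := μ.withDensity ρ
  have hμ : μ (A \ E) ≤ μ (E \ A) := by
    rw [← measure_inter_add_sdiff A hE, ← measure_inter_add_sdiff E hA, inter_comm] at hAE
    exact (ENNReal.add_le_add_iff_left (measure_ne_top μ _)).mp hAE
  have hAE_le : ν (A \ E) ≤ L * μ (A \ E) := by
    rw [withDensity_apply _ (hA.diff hE), ← setLIntegral_const]
    exact setLIntegral_mono' (hA.diff hE) fun y hy => hρA y hy.1
  have hEA_ge : L * μ (E \ A) ≤ ν (E \ A) := by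
    rw [withDensity_apply _ (hE.diff hA), ← setLIntegral_const]
    exact setLIntegral_mono' (hE.diff hA) fun y hy => hρAc y hy.2
  calc ν A = ν (A ∩ E) + ν (A \ E) := (measure_inter_add_sdiff A hE).symm
    _ ≤ ν (E ∩ A) + ν (E \ A) := by
      rw [inter_comm]
      exact add_le_add le_rfl (hAE_le.trans ((mul_le_mul_right hμ L).trans hEA_ge))
    _ = ν E := measure_inter_add_sdiff E hA

lemma MeasureTheory.Measure.pi_withDensity {ι : Type*} [Fintype ι] {α : ι → Type*}
    [∀ i, MeasurableSpace (α i)] {μ : ∀ i, Measure (α i)} [∀ i, IsProbabilityMeasure (μ i)]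
    {f : ∀ i, α i → ℝ≥0∞} (hf : ∀ i, Measurable (f i))
    [∀ i, SigmaFinite ((μ i).withDensity (f i))] :
    Measure.pi (fun i => (μ i).withDensity (f i))
      = (Measure.pi μ).withDensity (fun y => ∏ i, f i (y i)) := by
  refine Measure.pi_eq fun s hs => ?_
  have hind : ∀ y, (univ.pi s).indicator (fun y => ∏ i, f i (y i)) y
      = ∏ i, (s i).indicator (f i) (y i) := by
    intro y
    by_cases hy : y ∈ univ.pi s
    · simp [indicator_of_mem hy, indicator_of_mem (hy _ (mem_univ _))]
    · obtain ⟨i, -, hi⟩ : ∃ i ∈ univ, y i ∉ s i := by simpa [Set.mem_pi] using hy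
      rw [indicator_of_notMem hy, eq_comm]
      exact Finset.prod_eq_zero (Finset.mem_univ i) (indicator_of_notMem hi _)
  rw [withDensity_apply _ (.univ_pi hs), ← lintegral_indicator (.univ_pi hs)]
  simp_rw [hind]
  rw [lintegral_prod_eq_prod_lintegral_of_indepFun _ _
    (iIndepFun_pi fun i => ((hf i).indicator (hs i)).aemeasurable)
    fun i => ((hf i).indicator (hs i)).comp (measurable_pi_apply i)]
  refine Finset.prod_congr rfl fun i _ => ?_
  rw [withDensity_apply _ (hs i), ← lintegral_indicator (hs i),
    ← (measurePreserving_eval μ i).lintegral_comp ((hf i).indicator (hs i))]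

lemma MeasureTheory.Measure.pi_map_sum_eq_gaussianReal {ι : Type*} [Fintype ι] {Ω : ι → Type*}
    [∀ i, MeasurableSpace (Ω i)] {μ : ∀ i, Measure (Ω i)} [∀ i, IsProbabilityMeasure (μ i)]
    {f : ∀ i, Ω i → ℝ} (hf : ∀ i, Measurable (f i)) {m : ι → ℝ} {v : ι → ℝ≥0}
    (h : ∀ i, (μ i).map (f i) = gaussianReal (m i) (v i)) :
    (Measure.pi μ).map (fun ω => ∑ i, f i (ω i)) = gaussianReal (∑ i, m i) (∑ i, v i) := by
  have hlaw : ∀ i, (Measure.pi μ).map (f i ∘ fun ω => ω i) = gaussianReal (m i) (v i) := by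
    intro i
    rw [← Measure.map_map (hf i) (measurable_pi_apply i), (measurePreserving_eval μ i).map_eq, h i]
  refine Measure.ext_of_charFun ?_
  have hprod := (iIndepFun_pi (μ := μ) fun i => (hf i).aemeasurable).charFun_map_fun_sum_eq_prod
    fun i => ((hf i).comp (measurable_pi_apply i)).aemeasurable
  simp only [Function.comp_apply] at hprod
  rw [hprod]
  ext t
  simp only [hlaw, Finset.prod_apply, charFun_gaussianReal, ← Complex.exp_sum]
  congr 1
  push_cast
  rw [Finset.sum_sub_distrib, Finset.mul_sum, Finset.sum_mul, Finset.sum_mul, Finset.sum_div]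

lemma MeasureTheory.Measure.pi_pi_eq_map_curry {ι κ X : Type*} [Fintype ι] [Fintype κ]
    [MeasurableSpace X] (μ : ι → κ → Measure X) [∀ i j, IsProbabilityMeasure (μ i j)] :
    Measure.pi (fun i => Measure.pi fun j => μ i j)
      = (Measure.pi fun p : ι × κ => μ p.1 p.2).map (MeasurableEquiv.curry ι κ X) := by
  simp_rw [← Measure.infinitePi_eq_pi]
  exact (Measure.infinitePi_map_curry μ).symm

lemma gaussianReal_apply_Iic_add_sqrt_mul (m : ℝ) {v : ℝ≥0} (hv : v ≠ 0) (t : ℝ) :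
    gaussianReal m v (Iic (m + √v * t)) = ENNReal.ofReal (stdNormalCDF t) := by
  have hs : 0 < √(v : ℝ) := Real.sqrt_pos.2 (by positivity)
  have hstd : gaussianReal m v = ((gaussianReal 0 1).map (√(v : ℝ) * ·)).map (· + m) := by
    rw [gaussianReal_map_const_mul, gaussianReal_map_add_const]
    congr 1
    · ring
    · ext; simp [Real.sq_sqrt v.coe_nonneg]
  have hpre : (√(v : ℝ) * ·) ⁻¹' ((· + m) ⁻¹' Iic (m + √v * t)) = Iic t := by
    ext u
    simp [add_comm m, mul_le_mul_iff_right₀ hs]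
  rw [hstd, Measure.map_apply (by fun_prop) measurableSet_Iic,
    Measure.map_apply (by fun_prop) (measurableSet_Iic.preimage (by fun_prop)), hpre,
    gaussianReal_apply_eq_integral _ one_ne_zero, stdNormalCDF]
  congr 1
  refine setIntegral_congr_fun measurableSet_Iic fun u _ => ?_
  simp [gaussianPDFReal]

lemma gaussianReal_add_mul_eq_withDensity (m θ : ℝ) {v : ℝ≥0} (hv : v ≠ 0) :
    gaussianReal (m + v * θ) v = (gaussianReal m v).withDensity
      (fun t => ENNReal.ofReal (exp (θ * (t - m) - v * θ ^ 2 / 2))) := by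
  have hv' : (v : ℝ) ≠ 0 := by exact_mod_cast hv
  rw [gaussianReal_of_var_ne_zero _ hv, gaussianReal_of_var_ne_zero _ hv,
    ← withDensity_mul _ (measurable_gaussianPDF _ _) (by fun_prop)]
  congr 1
  ext t
  simp only [Pi.mul_apply, gaussianPDF]
  rw [← ENNReal.ofReal_mul (gaussianPDFReal_nonneg _ _ _)]
  congr 1
  simp only [gaussianPDFReal]
  conv_rhs => rw [mul_assoc, ← Real.exp_add]
  congr 2
  field_simp
  ring

lemma pi_gaussianReal_add_mul_eq_withDensity {ι : Type*} [Fintype ι] (m θ : ι → ℝ)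
    {v : ι → ℝ≥0} (hv : ∀ i, v i ≠ 0) :
    Measure.pi (fun i => gaussianReal (m i + v i * θ i) (v i))
      = (Measure.pi fun i => gaussianReal (m i) (v i)).withDensity
          (fun y => ENNReal.ofReal (exp (∑ i, (θ i * (y i - m i) - v i * θ i ^ 2 / 2)))) := by
  simp_rw [gaussianReal_add_mul_eq_withDensity _ _ (hv _)]
  rw [Measure.pi_withDensity fun i => by fun_prop]
  simp_rw [exp_sum, ENNReal.ofReal_prod_of_nonneg fun i _ => (exp_pos _).le]

theorem pi_gaussianReal_add_mul_apply_ge {ι : Type*} [Fintype ι] (m θ : ι → ℝ)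
    {v : ι → ℝ≥0} (hv : ∀ i, v i ≠ 0) {E : Set (ι → ℝ)} (hE : MeasurableSet E) {a : ℝ}
    (h : ENNReal.ofReal (stdNormalCDF a) ≤ Measure.pi (fun i => gaussianReal (m i) (v i)) E) :
    ENNReal.ofReal (stdNormalCDF (a - √(∑ i, v i * θ i ^ 2)))
      ≤ Measure.pi (fun i => gaussianReal (m i + v i * θ i) (v i)) E := by
  set V : ℝ≥0 := ∑ i, ⟨θ i ^ 2, sq_nonneg _⟩ * v i with hV_def
  have hVcoe : (V : ℝ) = ∑ i, v i * θ i ^ 2 := by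
    rw [hV_def, NNReal.coe_sum]
    exact Finset.sum_congr rfl fun i _ => mul_comm _ _
  rw [← hVcoe]
  by_cases hV0 : V = 0
  · have hθ : ∀ i, θ i = 0 := by
      intro i
      rcases mul_eq_zero.1 (Finset.sum_eq_zero_iff.1 hV0 i (Finset.mem_univ i)) with h0 | h0
      · exact pow_eq_zero_iff two_ne_zero |>.1 (congrArg NNReal.toReal h0)
      · exact absurd h0 (hv i)
    simpa [hθ, hV0] using h
  set T : (ι → ℝ) → ℝ := fun y => ∑ i, θ i * y i
  set M := ∑ i, θ i * m i
  have hT : Measurable T := by fun_prop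
  have hlaw : ∀ m' : ι → ℝ, (Measure.pi fun i => gaussianReal (m' i) (v i)).map T
      = gaussianReal (∑ i, θ i * m' i) V :=
    fun m' => Measure.pi_map_sum_eq_gaussianReal (fun i => measurable_const_mul (θ i))
      fun i => gaussianReal_map_const_mul (θ i)
  have hshift : ∑ i, θ i * (m i + v i * θ i) = M + V := by
    rw [hVcoe, ← Finset.sum_add_distrib]
    exact Finset.sum_congr rfl fun i _ => by ring
  have hexponent : ∀ y, ∑ i, (θ i * (y i - m i) - v i * θ i ^ 2 / 2) = T y - M - V / 2 := by
    intro y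
    rw [hVcoe, Finset.sum_div, ← Finset.sum_sub_distrib, ← Finset.sum_sub_distrib]
    exact Finset.sum_congr rfl fun i _ => by ring
  set A := T ⁻¹' Iic (M + √V * a)
  have hA : MeasurableSet A := hT measurableSet_Iic
  have hμA : Measure.pi (fun i => gaussianReal (m i) (v i)) A
      = ENNReal.ofReal (stdNormalCDF a) := by
    rw [← Measure.map_apply hT measurableSet_Iic, hlaw, gaussianReal_apply_Iic_add_sqrt_mul _ hV0]
  have hνA : Measure.pi (fun i => gaussianReal (m i + v i * θ i) (v i)) A
      = ENNReal.ofReal (stdNormalCDF (a - √V)) := by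
    have hthreshold : M + √V * a = M + V + √V * (a - √V) := by
      rw [mul_sub, Real.mul_self_sqrt V.coe_nonneg]; ring
    rw [← Measure.map_apply hT measurableSet_Iic, hlaw, hshift, hthreshold,
      gaussianReal_apply_Iic_add_sqrt_mul _ hV0]
  rw [← hνA, pi_gaussianReal_add_mul_eq_withDensity m θ hv]
  refine Measure.withDensity_apply_le_of_sublevel hA hE
    (L := ENNReal.ofReal (exp (√V * a - V / 2))) (fun y hy => ?_) (fun y hy => ?_) (hμA.trans_le h)
  · rw [hexponent]
    have : T y ≤ M + √V * a := hy
    exact ENNReal.ofReal_le_ofReal (exp_le_exp.2 (by linarith))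
  · rw [hexponent]
    have : M + √V * a < T y := not_le.1 hy
    exact ENNReal.ofReal_le_ofReal (exp_le_exp.2 (by linarith))

theorem pi_pi_gaussianReal_add_apply_ge {ι κ : Type*} [Fintype ι] [Fintype κ]
    (x e : κ → ℝ) (σ : ι → ℝ) (hσ : ∀ i, σ i ≠ 0) {S : Set (ι → κ → ℝ)}
    (hS : MeasurableSet S) {a : ℝ}
    (h : ENNReal.ofReal (stdNormalCDF a) ≤ (Measure.pi fun i =>
      Measure.pi fun j => gaussianReal (x j) ⟨σ i ^ 2, sq_nonneg (σ i)⟩) S) :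
    ENNReal.ofReal (stdNormalCDF (a - √(∑ j, e j ^ 2) * √(∑ i, 1 / σ i ^ 2)))
      ≤ (Measure.pi fun i =>
          Measure.pi fun j => gaussianReal (x j + e j) ⟨σ i ^ 2, sq_nonneg (σ i)⟩) S := by
  let V : ι → ℝ≥0 := fun i => ⟨σ i ^ 2, sq_nonneg _⟩
  let θ : ι × κ → ℝ := fun p => e p.2 / σ p.1 ^ 2
  have hV : ∀ p : ι × κ, V p.1 ≠ 0 := fun p h0 => pow_ne_zero 2 (hσ p.1) (congrArg NNReal.toReal h0)
  have hshift : ∀ p : ι × κ, x p.2 + V p.1 * θ p = x p.2 + e p.2 := fun p => by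
    change x p.2 + σ p.1 ^ 2 * (e p.2 / σ p.1 ^ 2) = _
    field_simp [hσ p.1]
  have hs : √(∑ p : ι × κ, V p.1 * θ p ^ 2) = √(∑ j, e j ^ 2) * √(∑ i, 1 / σ i ^ 2) := by
    have hterm : ∀ p : ι × κ, (V p.1 : ℝ) * θ p ^ 2 = 1 / σ p.1 ^ 2 * e p.2 ^ 2 := fun p => by
      change σ p.1 ^ 2 * (e p.2 / σ p.1 ^ 2) ^ 2 = _
      field_simp [hσ p.1]
    rw [Finset.sum_congr rfl fun p _ => hterm p,
      Fintype.sum_prod_type' (fun i j => 1 / σ i ^ 2 * e j ^ 2), ← Finset.sum_mul_sum,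
      Real.sqrt_mul (Finset.sum_nonneg fun i _ => by positivity), mul_comm]
  -- As elaborated, `⟨σ i ^ 2, _⟩` has type `{r // 0 ≤ r}`, where no `IsProbabilityMeasure`
  -- instance is found for the Gaussian; restating the measures with `V` fixes this.
  change _ ≤ (Measure.pi fun i => Measure.pi fun j => gaussianReal (x j) (V i)) S at h
  change _ ≤ (Measure.pi fun i => Measure.pi fun j => gaussianReal (x j + e j) (V i)) S
  rw [Measure.pi_pi_eq_map_curry, MeasurableEquiv.map_apply] at h ⊢
  have hflat := pi_gaussianReal_add_mul_apply_ge (fun p => x p.2) θ hV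
    (hS.preimage (MeasurableEquiv.curry ι κ ℝ).measurable) (a := a)
  simpa only [hshift, hs] using hflat h

theorem nonadaptive_composition_dominance_general (d k : ℕ)
    (σ : Fin k → ℝ) (hσ : ∀ i, 0 < σ i)
    (x e : EuclideanSpace ℝ (Fin d))
    (E : Set (Fin k → EuclideanSpace ℝ (Fin d))) (hE : MeasurableSet E) (a : ℝ)
    (h : (Measure.pi fun i : Fin k =>
            Measure.pi fun j : Fin d => gaussianReal (x j) ⟨σ i ^ 2, sq_nonneg (σ i)⟩)
              ((fun y : Fin k → Fin d → ℝ => fun i => WithLp.toLp 2 (y i)) ⁻¹' E)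
          ≥ ENNReal.ofReal (stdNormalCDF a)) :
    (Measure.pi fun i : Fin k =>
        Measure.pi fun j : Fin d =>
          gaussianReal ((x + e) j) ⟨σ i ^ 2, sq_nonneg (σ i)⟩)
          ((fun y : Fin k → Fin d → ℝ => fun i => WithLp.toLp 2 (y i)) ⁻¹' E)
      ≥ ENNReal.ofReal
          (stdNormalCDF (a - ‖e‖ * Real.sqrt (∑ i, 1 / σ i ^ 2))) := by
  have hS : MeasurableSet ((fun y : Fin k → Fin d → ℝ => fun i => WithLp.toLp 2 (y i)) ⁻¹' E) :=
    (by fun_prop : Measurable fun y : Fin k → Fin d → ℝ => fun i => WithLp.toLp 2 (y i)) hE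
  have hnorm : ‖e‖ = √(∑ j, e j ^ 2) := by simp [EuclideanSpace.norm_eq]
  rw [hnorm]
  exact pi_pi_gaussianReal_add_apply_ge x e σ (fun i => (hσ i).ne') hS (ge_iff_le.1 h)

/-- Non-adaptive composition of smoothing mechanisms: releasing `k` independent
Gaussian-noised copies of the input `x ∈ ℝ^d` with noise scales `σ i` yields a
mechanism satisfying, for every `ℓ₂` perturbation `e`, the dominance
`P_x E ≥ Φ(a) → P_{x+e} E ≥ Φ(a - ‖e‖₂ * √(∑ i, 1 / σ i ^ 2))`. -/
theorem nonadaptive_composition_dominance (d k : ℕ) (hd : 1 ≤ d) (hk : 1 ≤ k)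
    (σ : Fin k → ℝ) (hσ : ∀ i, 0 < σ i)
    (x e : EuclideanSpace ℝ (Fin d))
    (E : Set (Fin k → EuclideanSpace ℝ (Fin d))) (hE : MeasurableSet E) (a : ℝ)
    (h : (Measure.pi fun i : Fin k =>
            Measure.pi fun j : Fin d => gaussianReal (x j) ⟨σ i ^ 2, sq_nonneg (σ i)⟩)
              ((fun y : Fin k → Fin d → ℝ => fun i => WithLp.toLp 2 (y i)) ⁻¹' E)
          ≥ ENNReal.ofReal (stdNormalCDF a)) :
    (Measure.pi fun i : Fin k =>
        Measure.pi fun j : Fin d =>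
          gaussianReal ((x + e) j) ⟨σ i ^ 2, sq_nonneg (σ i)⟩)
          ((fun y : Fin k → Fin d → ℝ => fun i => WithLp.toLp 2 (y i)) ⁻¹' E)
      ≥ ENNReal.ofReal
          (stdNormalCDF (a - ‖e‖ * Real.sqrt (∑ i, 1 / σ i ^ 2))) :=
  nonadaptive_composition_dominance_general d k σ hσ x e E hE a h
end

section
/- (Robustness certificate from GDP dominance; Theorem 1, abstract form.) Let Y be a finite nonempty set, σ > 0, and let K assign to each x ∈ ℝ^d a probability measure K(x) on Y. Let Φ(t) denote the standard normal CDF, Φ(t) = (2π)^{−1/2}·∫_{−∞}^t e^{−u²/2} du. Assume the dominance property: for all u, v ∈ ℝ^d, every E ⊆ Y, and every a ∈ ℝ, if K(u)(E) ≥ Φ(a) then K(v)(E) ≥ Φ(a − ‖u − v‖₂/σ). Fix x ∈ ℝ^d, a label y₊ ∈ Y, and reals a ≥ b such that K(x)({y₊}) ≥ Φ(a) and K(x)({y}) ≤ Φ(b) for every y ≠ y₊. Then for every e ∈ ℝ^d with ‖e‖₂ < (σ/2)·(a − b) and every y ≠ y₊, we have K(x+e)({y₊}) > K(x+e)({y}).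 -/
open MeasureTheory

/-!
If `‖e‖ < (σ/2)(a - b)`, then `a - ‖e‖/σ > (a + b)/2 > b + ‖e‖/σ`. Dominance from `x` to `x + e`
keeps the mass of `y₊` at least `Φ(a - ‖e‖/σ)`. Dominance in the reverse direction, from `x + e`
back to `x`, shows that any other class with mass `Φ((a + b)/2)` at `x + e` would have mass more
than `Φ(b)` at `x`; so its mass at `x + e` stays below `Φ((a + b)/2)`.
-/

open Set ProbabilityTheory

theorem strictMono_setIntegral_Iic {f : ℝ → ℝ} (hf : Integrable f) (hpos : ∀ x, 0 < f x) :
    StrictMono fun t => ∫ x in Iic t, f x := fun s t hst => by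
  rw [← sub_pos, intervalIntegral.integral_Iic_sub_Iic hf.integrableOn hf.integrableOn]
  exact intervalIntegral.intervalIntegral_pos_of_pos hf.intervalIntegrable hpos hst

theorem stdNormalCDF_eq_setIntegral_gaussianPDFReal (t : ℝ) :
    stdNormalCDF t = ∫ u in Iic t, gaussianPDFReal 0 1 u := by
  simp [stdNormalCDF, gaussianPDFReal]

theorem stdNormalCDF_nonneg (t : ℝ) : 0 ≤ stdNormalCDF t := by
  rw [stdNormalCDF_eq_setIntegral_gaussianPDFReal]
  exact setIntegral_nonneg measurableSet_Iic fun u _ => gaussianPDFReal_nonneg 0 1 u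

theorem stdNormalCDF_strictMono : StrictMono stdNormalCDF := by
  simpa only [funext stdNormalCDF_eq_setIntegral_gaussianPDFReal] using
    strictMono_setIntegral_Iic (integrable_gaussianPDFReal 0 1)
      fun u => gaussianPDFReal_pos 0 1 u one_ne_zero

theorem strictMono_ofReal_stdNormalCDF : StrictMono fun t => ENNReal.ofReal (stdNormalCDF t) :=
  fun _ _ hst => ENNReal.ofReal_lt_ofReal_iff'.2
    ⟨stdNormalCDF_strictMono hst, (stdNormalCDF_nonneg _).trans_lt (stdNormalCDF_strictMono hst)⟩

/-- With `Ψ = ofReal ∘ Φ` this is `(‖u - v‖ / σ)`-GDP of `K` in CDF form, for every pair `u, v`. -/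
def GDPDominance {X Y : Type*} [SeminormedAddCommGroup X] [MeasurableSpace Y]
    (Ψ : ℝ → ENNReal) (σ : ℝ) (K : X → Measure Y) : Prop :=
  ∀ u v : X, ∀ E : Set Y, ∀ a : ℝ, Ψ a ≤ K u E → Ψ (a - ‖u - v‖ / σ) ≤ K v E

namespace GDPDominance

variable {X Y : Type*} [SeminormedAddCommGroup X] [MeasurableSpace Y] {Ψ : ℝ → ENNReal} {σ : ℝ}
  {K : X → Measure Y} {x e : X} {E : Set Y} {a b c : ℝ}

theorem le_apply_add (hK : GDPDominance Ψ σ K) (h : Ψ a ≤ K x E) :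
    Ψ (a - ‖e‖ / σ) ≤ K (x + e) E := by
  simpa [sub_add_eq_sub_sub] using hK x (x + e) E a h

theorem apply_add_lt (hK : GDPDominance Ψ σ K) (hΨ : StrictMono Ψ) (h : K x E ≤ Ψ b)
    (hc : b + ‖e‖ / σ < c) : K (x + e) E < Ψ c := by
  by_contra! hge
  have hback : Ψ (c - ‖e‖ / σ) ≤ K x E := by simpa using hK (x + e) x E c hge
  exact (hΨ (lt_sub_iff_add_lt.2 hc)).not_ge (hback.trans h)

theorem apply_add_lt_apply_add (hK : GDPDominance Ψ σ K) (hΨ : StrictMono Ψ) (hσ : 0 < σ)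
    {F G : Set Y} (hF : Ψ a ≤ K x F) (hG : K x G ≤ Ψ b) (he : ‖e‖ < σ / 2 * (a - b)) :
    K (x + e) G < K (x + e) F := by
  have hmargin : ‖e‖ / σ < (a - b) / 2 := by
    rw [div_lt_iff₀ hσ]
    linarith
  calc K (x + e) G < Ψ ((a + b) / 2) := hK.apply_add_lt hΨ hG (by linarith)
    _ ≤ Ψ (a - ‖e‖ / σ) := hΨ.monotone (by linarith)
    _ ≤ K (x + e) F := hK.le_apply_add hF

end GDPDominance

theorem robustness_certificate_from_dominance_general
    {d : ℕ} {Y : Type*} [MeasurableSpace Y]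
    (σ : ℝ) (hσ : 0 < σ)
    (K : EuclideanSpace ℝ (Fin d) → Measure Y)
    (hdom : ∀ u v : EuclideanSpace ℝ (Fin d), ∀ E : Set Y, ∀ a : ℝ,
        K u E ≥ ENNReal.ofReal (stdNormalCDF a) →
        K v E ≥ ENNReal.ofReal (stdNormalCDF (a - ‖u - v‖ / σ)))
    (x : EuclideanSpace ℝ (Fin d)) (yPlus : Y) (a b : ℝ)
    (htop : K x {yPlus} ≥ ENNReal.ofReal (stdNormalCDF a))
    (hother : ∀ y : Y, y ≠ yPlus → K x {y} ≤ ENNReal.ofReal (stdNormalCDF b)) :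
    ∀ e : EuclideanSpace ℝ (Fin d), ‖e‖ < (σ / 2) * (a - b) →
      ∀ y : Y, y ≠ yPlus → K (x + e) {yPlus} > K (x + e) {y} :=
  fun _ he y hy =>
    GDPDominance.apply_add_lt_apply_add (Ψ := fun t => ENNReal.ofReal (stdNormalCDF t))
      hdom strictMono_ofReal_stdNormalCDF hσ htop (hother y hy) he

/-- Robustness certificate from GDP dominance (Theorem 1, abstract form): if the
mechanism `K` satisfies the Gaussian dominance property with scale `σ`, and at input
`x` the top class `yPlus` has probability at least `Φ(a)` while every other class has
probability at most `Φ(b)` with `a ≥ b`, then for every perturbation `e` with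
`‖e‖₂ < (σ/2) * (a - b)` the class `yPlus` still has the strictly largest probability. -/
theorem robustness_certificate_from_dominance
    {d : ℕ} {Y : Type*} [Fintype Y] [Nonempty Y] [MeasurableSpace Y]
    (σ : ℝ) (hσ : 0 < σ)
    (K : EuclideanSpace ℝ (Fin d) → Measure Y)
    (hK : ∀ x, IsProbabilityMeasure (K x))
    (hdom : ∀ u v : EuclideanSpace ℝ (Fin d), ∀ E : Set Y, ∀ a : ℝ,
        K u E ≥ ENNReal.ofReal (stdNormalCDF a) →
        K v E ≥ ENNReal.ofReal (stdNormalCDF (a - ‖u - v‖ / σ)))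
    (x : EuclideanSpace ℝ (Fin d)) (yPlus : Y) (a b : ℝ) (hab : a ≥ b)
    (htop : K x {yPlus} ≥ ENNReal.ofReal (stdNormalCDF a))
    (hother : ∀ y : Y, y ≠ yPlus → K x {y} ≤ ENNReal.ofReal (stdNormalCDF b)) :
    ∀ e : EuclideanSpace ℝ (Fin d), ‖e‖ < (σ / 2) * (a - b) →
      ∀ y : Y, y ≠ yPlus → K (x + e) {yPlus} > K (x + e) {y} :=
  robustness_certificate_from_dominance_general σ hσ K hdom x yPlus a b htop hother
end
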